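/- Let m and k be integers with m ≥ 1, and suppose that one of the following three conditions holds: (B.1) k − m ≡ 0 (mod 3) and k − m ≥ 0; (B.2) k − m ≡ 1 (mod 3) and k − m ≥ 4; (B.3) k − m ≡ 2 (mod 3) and k − m ≥ 8. Then there exist integer vectors a = (a₁, a₂, a₃, a₄) ∈ ℤ⁴ and b = (b₁, …, b_{2m}) ∈ ℤ^{2m} such that every entry bⱼ belongs to {1, 3} (in particular every bⱼ is nonzero), the sum a₁ + a₂ + a₃ + a₄ + b₁ + ⋯ + b_{2m} is even, and 3·(a₁² + a₂² + a₃² + a₄²) + (b₁² + ⋯ + b_{2m}²) = 2k. -/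

import Mathlib

/-!
Take `b` to consist of `t` threes and `2m - t` ones, where `t ∈ {0, 1, 2}` is the residue of
`k - m` mod 3. Then `‖b‖² = 2m + 8t`, so the equation asks for `‖a‖² = 2M` with
`k - m = 4t + 3M`; the size conditions say exactly that `M ≥ 0`, and Lagrange's four-square
theorem provides `a`. Parity is automatic: `x² ≡ x (mod 2)` makes `∑ aᵢ` even along with `‖a‖²`,
and `∑ bⱼ = 2m + 2t`.
-/

open Finset

theorem Int.even_sum_iff_even_sum_sq {ι : Type*} (s : Finset ι) (a : ι → ℤ) :
    Even (∑ i ∈ s, a i) ↔ Even (∑ i ∈ s, a i ^ 2) := by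
  have : Even (∑ i ∈ s, a i ^ 2 - ∑ i ∈ s, a i) := by
    rw [← sum_sub_distrib]
    exact even_sum _ fun i _ => by simpa [sq, mul_sub] using (a i).even_mul_pred_self
  exact (Int.even_sub.mp this).symm

theorem exists_fin_four_sum_sq_eq (N : ℕ) : ∃ a : Fin 4 → ℤ, ∑ i, a i ^ 2 = N := by
  obtain ⟨w, x, y, z, h⟩ := Nat.sum_four_squares N
  exact ⟨![w, x, y, z], by simp [Fin.sum_univ_four]; exact_mod_cast h⟩

def threesThenOnes (n t : ℕ) : Fin n → ℤ := fun j => if (j : ℕ) < t then 3 else 1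

theorem threesThenOnes_eq_one_or_eq_three (n t : ℕ) (j : Fin n) :
    threesThenOnes n t j = 1 ∨ threesThenOnes n t j = 3 := by
  unfold threesThenOnes
  split_ifs <;> simp

theorem sum_threesThenOnes_pow {n t : ℕ} (ht : t ≤ n) (p : ℕ) :
    ∑ j, threesThenOnes n t j ^ p = n + (3 ^ p - 1) * t := by
  have (j : Fin n) : threesThenOnes n t j ^ p = 1 + if (j : ℕ) < t then 3 ^ p - 1 else 0 := by
    unfold threesThenOnes
    split_ifs <;> simp
  simp [this, sum_add_distrib, sum_ite, Fin.card_filter_val_lt, ht, mul_sub, mul_comm]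

theorem exists_eq_add_four_mul_add_three_mul {k m : ℤ}
    (h : ((k - m) % 3 = 0 ∧ 0 ≤ k - m) ∨ ((k - m) % 3 = 1 ∧ 4 ≤ k - m) ∨
      ((k - m) % 3 = 2 ∧ 8 ≤ k - m)) :
    ∃ t M : ℕ, t ≤ 2 ∧ k = m + 4 * t + 3 * M :=
  ⟨((k - m) % 3).toNat, ((k - m - 4 * ((k - m) % 3)) / 3).toNat, by omega, by omega⟩

/-- Solvability (dimension `4m+2` case): under the stated congruence and size
conditions on `k - m`, there exist `a ∈ ℤ⁴` and `b ∈ ℤ^{2m}` with all `bⱼ ∈ {1, 3}`,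
`Σaᵢ + Σbⱼ` even, and `3‖a‖² + ‖b‖² = 2k`. -/
theorem stringc_witten_index_exists_4m_plus_2 (m : ℕ) (hm : 1 ≤ m) (k : ℤ)
    (h : ((k - (m : ℤ)) % 3 = 0 ∧ 0 ≤ k - (m : ℤ)) ∨
         ((k - (m : ℤ)) % 3 = 1 ∧ 4 ≤ k - (m : ℤ)) ∨
         ((k - (m : ℤ)) % 3 = 2 ∧ 8 ≤ k - (m : ℤ))) :
    ∃ (a : Fin 4 → ℤ) (b : Fin (2 * m) → ℤ),
      (∀ j, b j = 1 ∨ b j = 3) ∧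
      Even ((∑ i, a i) + ∑ j, b j) ∧
      3 * (∑ i, (a i) ^ 2) + (∑ j, (b j) ^ 2) = 2 * k := by
  obtain ⟨t, M, ht, rfl⟩ := exists_eq_add_four_mul_add_three_mul h
  have ht : t ≤ 2 * m := by omega
  obtain ⟨a, ha⟩ := exists_fin_four_sum_sq_eq (2 * M)
  refine ⟨a, threesThenOnes (2 * m) t, threesThenOnes_eq_one_or_eq_three _ _, ?_, ?_⟩
  · have ha_even : Even (∑ i, a i) := by
      rw [Int.even_sum_iff_even_sum_sq, ha]
      exact_mod_cast even_two_mul M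
    have hb : ∑ j, threesThenOnes (2 * m) t j = 2 * (m + t) := by
      simpa [mul_add] using sum_threesThenOnes_pow ht 1
    rw [hb]
    exact ha_even.add (even_two_mul _)
  · rw [ha, sum_threesThenOnes_pow ht 2]
    push_cast
    ring
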